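/- Let φ: A → L[τ] be a Drinfeld module of rank n, and fix u ∈ L̄((τ^{-1}))^× with u^{-1}·φ(F_∞)·u ⊆ k̄((τ^{-1})). Then: (i) for every σ ∈ W_L the series σ(u)·τ^{deg(σ)}·u^{-1} (σ acting on the coefficients of u, which lie in L^sep) belongs to D_φ^× and does not depend on the choice of u; (ii) defining ρ_∞(σ) := σ(u)·τ^{deg(σ)}·u^{-1}, one has ord_{τ^{-1}}(ρ_∞(σ)) = −deg(σ); (iii) ρ_∞: W_L → D_φ^× is a continuous group homomorphism; (iv) ρ_∞(W_L) commutes with End_L(φ). -/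

import Mathlib

/-!
Axiomatic framework for the Sato–Tate setting of Drinfeld modules (D. Zywina,
"The Sato-Tate Law for Drinfeld Modules").

We fix a finite field `k` with `q` elements, a global function field `F` with field of
constants `k`, a place `∞` of `F` with completion `Finf` (valuation `ord_∞`, residue degree
`dinf`), the ring `A ⊆ F` of functions regular away from `∞`, a field extension `L` of `k`
with algebraic closure `Lbar`, and the twisted Laurent series skew field `R = L̄((τ⁻¹))`
(with commutation rule `τ·a = a^q·τ`), which is axiomatized via its coefficient functionals.
A Drinfeld module of rank `n` is a ring homomorphism `φ : A → L[τ] ⊆ R`, together with its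
canonical extension `phiinf : Finf → R` satisfying `ord_{τ⁻¹}(phiinf x) = n·dinf·ord_∞(x)`.
-/

noncomputable section
open scoped Classical

namespace SatoTate

/-- An additive `ℤ ∪ {+∞}`-valued valuation on a division ring; e.g. the normalized
valuation `ord_∞` on `F_∞`, or `ord_{τ⁻¹}` on `L̄((τ⁻¹))`. -/
structure IsAddVal {K : Type*} [DivisionRing K] (v : K → WithTop ℤ) : Prop where
  top_iff : ∀ x, v x = ⊤ ↔ x = 0
  map_mul : ∀ x y, v (x * y) = v x + v y
  min_le : ∀ x y, min (v x) (v y) ≤ v (x + y)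

/-- `v` is a (normalized) place of `F`, trivial on the field of constants `k`. -/
def IsPlaceOver (k : Type*) {F : Type*} [Field k] [Field F] [Algebra k F]
    (v : F → WithTop ℤ) : Prop :=
  IsAddVal v ∧ (∀ c : k, c ≠ 0 → v (algebraMap k F c) = 0) ∧ ∃ x, v x = 1

/-- `L` is a finitely generated field (equivalently, finitely generated over the
prime field `k`). -/
def FinGenField (k L : Type*) [Field k] [Field L] [Algebra k L] : Prop :=
  ∃ s : Finset L, IntermediateField.adjoin k (s : Set L) = ⊤

/-- The ambient setting: `k`, `F`, `∞`, `Finf`, `A`, `L`, `L̄`, the twisted Laurent series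
skew field `R = L̄((τ⁻¹))`, and a Drinfeld module `φ : A → L[τ]` of rank `n`. -/
structure Ctx (q n dinf : ℕ) (k F Finf L Lbar R : Type)
    [Field k] [Fintype k] [Field F] [Algebra k F]
    [Field Finf] [Algebra k Finf] [Algebra F Finf] [IsScalarTower k F Finf]
    [Field L] [Algebra k L]
    [Field Lbar] [Algebra k Lbar] [Algebra L Lbar] [IsScalarTower k L Lbar]
    [DivisionRing R] : Type 1 where
  /-- `k` is the finite field with `q` elements. -/
  card_k : Fintype.card k = q
  one_lt_q : 1 < q
  n_pos : 0 < n
  dinf_pos : 0 < dinf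
  /-- `L̄` is an algebraic closure of `L`. -/
  algClosure : IsAlgClosure L Lbar
  /-- `k` is the field of constants of `F`. -/
  constants : ∀ x : F, IsAlgebraic k x → x ∈ (algebraMap k F).range
  /-- `F` is a function field in one variable over `k`. -/
  function_field : ∃ t : F, Transcendental k t ∧
    FiniteDimensional (IntermediateField.adjoin k ({t} : Set F)) F
  /-- The valuation `ord_∞` on the completion `Finf` of `F` at `∞`. -/
  vinf : Finf → WithTop ℤ
  vinf_val : IsAddVal vinf
  vinf_const : ∀ c : k, c ≠ 0 → vinf (algebraMap k Finf c) = 0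
  vinf_one : ∃ x : Finf, vinf x = 1
  /-- restricted to `F`, `ord_∞` is a place of `F`. -/
  vinf_place : IsPlaceOver k fun y : F => vinf (algebraMap F Finf y)
  /-- `Finf` is complete. -/
  complete : ∀ s : ℕ → Finf,
    (∀ m : ℤ, ∃ N, ∀ i ≥ N, ∀ j ≥ N, (m : WithTop ℤ) ≤ vinf (s i - s j)) →
    ∃ l, ∀ m : ℤ, ∃ N, ∀ i ≥ N, (m : WithTop ℤ) ≤ vinf (s i - l)
  /-- `F` is dense in `Finf`. -/
  dense : ∀ x : Finf, ∀ m : ℤ, ∃ y : F, (m : WithTop ℤ) ≤ vinf (x - algebraMap F Finf y)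
  /-- The residue field `𝔽_∞` of `∞` has degree `dinf` over `k`: the valuation ring of
  `ord_∞` has exactly `q ^ (dinf * m)` distinct balls of radius `m`. -/
  residue : ∀ m : ℕ, 0 < m → Nat.card
    {s : Set Finf // ∃ x, 0 ≤ vinf x ∧ s = {y | 0 ≤ vinf y ∧ (m : WithTop ℤ) ≤ vinf (y - x)}}
      = q ^ (dinf * m)
  /-- the inclusion of constants `L̄ → L̄((τ⁻¹))`. -/
  cst : Lbar →+* R
  /-- the twist `τ` (the `q`-power Frobenius). -/
  τ : R
  /-- the commutation rule `τ · a = a^q · τ`. -/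
  τ_comm : ∀ a : Lbar, τ * cst a = cst (a ^ q) * τ
  /-- `coeff f i` is the coefficient of `τ⁻ⁱ` in `f = ∑ᵢ (coeff f i)·τ⁻ⁱ`. -/
  coeff : R → ℤ → Lbar
  coeff_add : ∀ f g i, coeff (f + g) i = coeff f i + coeff g i
  coeff_injective : ∀ f g : R, (∀ i, coeff f i = coeff g i) → f = g
  coeff_bddBelow : ∀ f : R, ∃ N : ℤ, ∀ i < N, coeff f i = 0
  coeff_surjective : ∀ c : ℤ → Lbar, (∃ N : ℤ, ∀ i < N, c i = 0) →
    ∃ f : R, ∀ i, coeff f i = c i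
  coeff_monomial : ∀ (a : Lbar) (m i : ℤ), coeff (cst a * τ ^ m) i = if i = -m then a else 0
  /-- the valuation `ord_{τ⁻¹}` on `R`. -/
  w : R → WithTop ℤ
  w_val : IsAddVal w
  w_coeff : ∀ (f : R) (i : ℤ), (i : WithTop ℤ) ≤ w f ↔ ∀ j < i, coeff f j = 0
  /-- the coefficientwise action of `Gal(L̄/L)` on `R = L̄((τ⁻¹))`. -/
  galAct : (Lbar ≃ₐ[L] Lbar) → R →+* R
  galAct_coeff : ∀ (σ : Lbar ≃ₐ[L] Lbar) (f : R) (i : ℤ),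
    coeff (galAct σ f) i = σ (coeff f i)
  /-- `A ⊆ F` is the ring of functions regular away from `∞`. -/
  A : Subring F
  A_spec : ∀ x : F, x ∈ A ↔ ∀ v : F → WithTop ℤ, IsPlaceOver k v →
    v ≠ (fun y : F => vinf (algebraMap F Finf y)) → 0 ≤ v x
  /-- the Drinfeld module `φ : A → L[τ] ⊆ L̄((τ⁻¹))`. -/
  φ : ↥A →+* R
  /-- the coefficients of each `φ_a` lie in `L`. -/
  φ_coeff_L : ∀ (a : ↥A) (i : ℤ), coeff (φ a) i ∈ (algebraMap L Lbar).range
  /-- each `φ_a` is a twisted polynomial in `τ`. -/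
  φ_poly : ∀ (a : ↥A) (i : ℤ), 0 < i → coeff (φ a) i = 0
  /-- `φ(A)` is not contained in the constants. -/
  φ_nonconst : ∃ (a : ↥A) (i : ℤ), i ≠ 0 ∧ coeff (φ a) i ≠ 0
  /-- the canonical extension of `φ` to `Finf`. -/
  phiinf : Finf →+* R
  phiinf_extends : ∀ a : ↥A, phiinf (algebraMap F Finf (a : F)) = φ a
  /-- `φ` has rank `n`: `ord_{τ⁻¹}(φ_x) = n·dinf·ord_∞(x)`. -/
  rank : ∀ x : Finf, w (phiinf x) = (n * dinf) • vinf x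
  /-- `cpoly f = det(T·1 − f)` is the reduced characteristic polynomial of `f ∈ D_φ`
  over `Finf`: the monic polynomial of degree `n` that is a power of the minimal
  polynomial of `f` over `Finf`. -/
  cpoly : R → Polynomial Finf
  cpoly_spec : ∀ f : R, (∀ a : ↥A, f * φ a = φ a * f) →
    (cpoly f).Monic ∧ (cpoly f).natDegree = n ∧
    (∑ i ∈ Finset.range (n + 1), phiinf ((cpoly f).coeff i) * f ^ i = 0) ∧
    ∃ (g : Polynomial Finf) (m : ℕ), g.Monic ∧ Irreducible g ∧
      (∑ i ∈ Finset.range (g.natDegree + 1), phiinf (g.coeff i) * f ^ i = 0) ∧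
      cpoly f = g ^ m

/-- The units of the centralizer of a subset `s ⊆ R`, as a subgroup of `Rˣ`. -/
def unitsCentralizer {R : Type*} [Ring R] (s : Set R) : Subgroup Rˣ where
  carrier := {y : Rˣ | (y : R) ∈ Subring.centralizer s}
  one_mem' := by
    show ((1 : Rˣ) : R) ∈ Subring.centralizer s
    rw [Units.val_one]; exact Subring.one_mem _
  mul_mem' := by
    intro a b ha hb
    show ((a * b : Rˣ) : R) ∈ Subring.centralizer s
    rw [Units.val_mul]; exact Subring.mul_mem _ ha hb
  inv_mem' := by
    intro y hy
    rw [Set.mem_setOf_eq, Subring.mem_centralizer_iff] at hy ⊢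
    intro g hg
    have h := hy g hg
    have h2 : (y : R) * (g * (↑y⁻¹ : R)) = g := by
      rw [← mul_assoc, ← h, mul_assoc, Units.mul_inv, mul_one]
    calc g * (↑y⁻¹ : R) = ↑y⁻¹ * ((y : R) * (g * ↑y⁻¹)) := by
          rw [← mul_assoc, Units.inv_mul, one_mul]
      _ = ↑y⁻¹ * g := by rw [h2]

namespace Ctx

variable {q n dinf : ℕ} {k F Finf L Lbar R : Type}
  [Field k] [Fintype k] [Field F] [Algebra k F]
  [Field Finf] [Algebra k Finf] [Algebra F Finf] [IsScalarTower k F Finf]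
  [Field L] [Algebra k L]
  [Field Lbar] [Algebra k Lbar] [Algebra L Lbar] [IsScalarTower k L Lbar]
  [DivisionRing R]

variable (C : Ctx q n dinf k F Finf L Lbar R)

/-- `D_φ`: the centralizer of `φ(A)` in `R = L̄((τ⁻¹))`; a central `Finf`-division
algebra with invariant `−1/n`. -/
def D : Subring R := Subring.centralizer (Set.range fun a : ↥C.A => C.φ a)

/-- membership in the twisted polynomial ring `L[τ] ⊆ R`. -/
def MemLtau (f : R) : Prop :=
  (∀ i : ℤ, 0 < i → C.coeff f i = 0) ∧ ∀ i : ℤ, C.coeff f i ∈ (algebraMap L Lbar).range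

/-- membership in the twisted polynomial ring `L̄[τ] ⊆ R`. -/
def MemLbartau (f : R) : Prop := ∀ i : ℤ, 0 < i → C.coeff f i = 0

/-- the endomorphism ring `End_L(φ)`: the centralizer of `φ(A)` in `L[τ]`. -/
def EndL : Set R := {f | C.MemLtau f ∧ ∀ a : ↥C.A, f * C.φ a = C.φ a * f}

/-- the endomorphism ring `End_{L̄}(φ)`: the centralizer of `φ(A)` in `L̄[τ]`. -/
def EndLbar : Set R := {f | C.MemLbartau f ∧ ∀ a : ↥C.A, f * C.φ a = C.φ a * f}

/-- `B_φ`: the centralizer of `End_{L̄}(φ)` in `R = L̄((τ⁻¹))`. -/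
def B : Subring R := Subring.centralizer C.EndLbar

/-- `σ ∈ Gal(L̄/L)` belongs to the Weil group `W_L` with `deg σ = d`: the restriction of
`σ` to the algebraic closure `k̄` of `k` in `L̄` is the `d`-th power of `x ↦ x^q`. -/
def WeilCond (_C : Ctx q n dinf k F Finf L Lbar R) (σ : Lbar ≃ₐ[L] Lbar) (d : ℤ) : Prop :=
  ∀ x : Lbar, IsAlgebraic k x → σ x ^ q ^ (-d).toNat = x ^ q ^ d.toNat

/-- `u ∈ L̄((τ⁻¹))^×` has coefficients in `L^sep` and satisfies
`u⁻¹ · φ(A) · u ⊆ k̄((τ⁻¹))`. -/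
def UGood (u : R) : Prop :=
  u ≠ 0 ∧ (∀ i : ℤ, C.coeff u i ∈ separableClosure L Lbar) ∧
    ∀ (a : ↥C.A) (i : ℤ), IsAlgebraic k (C.coeff (u⁻¹ * C.φ a * u) i)

/-- `u ∈ L̄((τ⁻¹))^×` satisfies `u⁻¹ · φ(Finf) · u ⊆ k̄((τ⁻¹))`. -/
def UGoodInf (u : R) : Prop :=
  u ≠ 0 ∧ ∀ (x : Finf) (i : ℤ), IsAlgebraic k (C.coeff (u⁻¹ * C.phiinf x * u) i)

/-- the Sato–Tate representation: `ρ_∞(σ) = σ(u) · τ^{deg σ} · u⁻¹`. -/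
def rho (σ : Lbar ≃ₐ[L] Lbar) (d : ℤ) (u : R) : R := C.galAct σ u * C.τ ^ d * u⁻¹

/-- the image `ρ_∞(W_L) ⊆ D_φ^×`, as a subset of `R`. -/
def rhoSet : Set R :=
  {r | ∃ (σ : Lbar ≃ₐ[L] Lbar) (d : ℤ) (u : R), C.WeilCond σ d ∧ C.UGood u ∧ r = C.rho σ d u}

/-- `D_φ^×`, as a subgroup of `Rˣ`. -/
def DUnits : Subgroup Rˣ := unitsCentralizer (Set.range fun a : ↥C.A => C.φ a)

/-- `B_φ^×`, as a subgroup of `Rˣ`. -/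
def BUnits : Subgroup Rˣ := unitsCentralizer C.EndLbar

/-- `H` contains a neighbourhood of `1` in `K` for the `∞`-adic (i.e. `ord_{τ⁻¹}`-adic)
topology; together with `H ≤ K` this says that `H` is an open subgroup of `K`. -/
def OpenIn (K H : Subgroup Rˣ) : Prop :=
  ∃ m : ℤ, ∀ y : Rˣ, y ∈ K → (m : WithTop ℤ) ≤ C.w ((y : R) - 1) → y ∈ H

/-- `φ` has generic characteristic: `∂ ∘ φ : A → L` is injective. -/
def GenericChar : Prop := ∀ a : ↥C.A, C.coeff (C.φ a) 0 = 0 → a = 0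

/-- `End_{L̄}(φ) = φ(A)`: no extra endomorphisms. -/
def NoExtraEnd : Prop := ∀ f ∈ C.EndLbar, ∃ a : ↥C.A, f = C.φ a

/-- the image of `End_L(φ) ⊗_A Finf` in `D_φ`. -/
def endSpan : Set R :=
  {f | ∃ (m : ℕ) (e : Fin m → R) (z : Fin m → Finf),
    (∀ i, e i ∈ C.EndL) ∧ f = ∑ i, e i * C.phiinf (z i)}

/-- the reduced trace `tr : D_φ → Finf` (read off from the reduced characteristic
polynomial). -/
def Trd (f : R) : Finf := -((C.cpoly f).coeff (n - 1))

/-- the reduced norm `det : D_φ → Finf` (read off from the reduced characteristic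
polynomial). -/
def Nrd (f : R) : Finf := (-1) ^ n * (C.cpoly f).coeff 0


/-!
Conjugation by `u` moves `φ(F_∞)` into `k̄((τ⁻¹))`, and on `k̄((τ⁻¹))` an element `σ` of the Weil
group of degree `d` acts coefficientwise as the `d`-th power of the `q`-Frobenius, that is, as
conjugation by `τ^d`. The key point is a rigidity statement: if `g, g' ∈ k̄((τ⁻¹))` have the same
negative valuation and `g v = v g'`, then `v ∈ k̄((τ⁻¹))`. Indeed, comparing leading terms shows
that each new coefficient of `v` is a root of a polynomial `a X^{q^N} - b X - δ` over `k̄`.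

Taking `g = u⁻¹ φ_a u` for a nonconstant `a ∈ A`, any two admissible `u` and `u'` differ by a right
factor in `k̄((τ⁻¹))`, and `σ(·) τ^d` absorbs that factor, so `ρ_∞(σ)` does not depend on `u`. Now
take an `x` that is fixed by `σ` and commutes with `φ(A)`, such as an element of `φ(A)` or of
`End_L(φ)`. Then `x u` is again admissible, which forces `x` to commute with `ρ_∞(σ)`. Replacing
`u` by `σ₂(u)` gives multiplicativity.
-/

theorem mem_algebraicClosure_of_pow_eq {K E : Type*} [Field K] [Field E] [Algebra K E]
    {Q : ℕ} (hQ : 1 < Q) {x b d : E} (hb : b ∈ algebraicClosure K E)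
    (hd : d ∈ algebraicClosure K E) (h : x ^ Q = b * x + d) : x ∈ algebraicClosure K E := by
  open Polynomial in
  have hx : IsIntegral (algebraicClosure K E) x := by
    refine ⟨X ^ Q - (Polynomial.C ⟨b, hb⟩ * X + Polynomial.C ⟨d, hd⟩),
      monic_X_pow_sub (degree_linear_le.trans_lt (by exact_mod_cast hQ)), ?_⟩
    simp only [eval₂_sub, eval₂_pow, eval₂_X, eval₂_add, eval₂_mul, eval₂_C]
    exact sub_eq_zero.mpr h
  exact isIntegral_trans x hx

section Coefficients

variable {f : R}

def coeffHom (i : ℤ) : R →+ Lbar where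
  toFun f := C.coeff f i
  map_zero' := by simpa using C.coeff_add 0 0 i
  map_add' f g := C.coeff_add f g i

lemma coeff_zero (i : ℤ) : C.coeff 0 i = 0 := map_zero (C.coeffHom i)

lemma coeff_sub (f g : R) (i : ℤ) : C.coeff (f - g) i = C.coeff f i - C.coeff g i :=
  map_sub (C.coeffHom i) f g

lemma coeff_neg (f : R) (i : ℤ) : C.coeff (-f) i = -C.coeff f i :=
  map_neg (C.coeffHom i) f

lemma coeff_sum {ι : Type*} (s : Finset ι) (f : ι → R) (i : ℤ) :
    C.coeff (∑ j ∈ s, f j) i = ∑ j ∈ s, C.coeff (f j) i :=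
  map_sum (C.coeffHom i) f s

lemma coeff_eq_zero_of_lt_w {i : ℤ} (h : (i : WithTop ℤ) < C.w f) : C.coeff f i = 0 := by
  refine (C.w_coeff f (i + 1)).mp ?_ i (lt_add_one i)
  cases hw : C.w f with
  | top => exact le_top
  | coe c => rw [hw, WithTop.coe_lt_coe] at h; exact WithTop.coe_le_coe.mpr h

lemma w_le_of_coeff_ne_zero {i : ℤ} (h : C.coeff f i ≠ 0) : C.w f ≤ i :=
  le_of_not_gt fun hlt => h (C.coeff_eq_zero_of_lt_w hlt)

lemma w_eq_of_coeff {c : ℤ} (h0 : ∀ j < c, C.coeff f j = 0) (h1 : C.coeff f c ≠ 0) :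
    C.w f = c :=
  le_antisymm (C.w_le_of_coeff_ne_zero h1) ((C.w_coeff f c).mpr h0)

lemma coeff_w_ne_zero {c : ℤ} (h : C.w f = c) : C.coeff f c ≠ 0 := by
  intro h0
  have : ((c + 1 : ℤ) : WithTop ℤ) ≤ C.w f := (C.w_coeff f _).mpr fun j hj => by
    rcases (Int.lt_add_one_iff.mp hj).lt_or_eq with hlt | rfl
    · exact C.coeff_eq_zero_of_lt_w (by rw [h]; exact_mod_cast hlt)
    · exact h0
  rw [h, WithTop.coe_le_coe] at this
  omega

lemma w_zero : C.w 0 = ⊤ := (C.w_val.top_iff 0).mpr rfl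

lemma exists_w_eq (hf : f ≠ 0) : ∃ c : ℤ, C.w f = c := by
  obtain ⟨c, hc⟩ := WithTop.ne_top_iff_exists.mp (mt (C.w_val.top_iff f).mp hf)
  exact ⟨c, hc.symm⟩

lemma exists_le_w (f : R) : ∃ c : ℤ, (c : WithTop ℤ) ≤ C.w f := by
  obtain ⟨c, hc⟩ := C.coeff_bddBelow f
  exact ⟨c, (C.w_coeff f c).mpr hc⟩

lemma coeff_one (i : ℤ) : C.coeff 1 i = if i = 0 then 1 else 0 := by
  simpa using C.coeff_monomial 1 0 i

lemma coeff_tau_zpow (d i : ℤ) : C.coeff (C.τ ^ d) i = if i = -d then 1 else 0 := by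
  simpa using C.coeff_monomial 1 d i

lemma le_w_monomial (a : Lbar) (d : ℤ) : ((-d : ℤ) : WithTop ℤ) ≤ C.w (C.cst a * C.τ ^ d) :=
  (C.w_coeff _ _).mpr fun j hj => by rw [C.coeff_monomial, if_neg hj.ne]

lemma w_tau_zpow (d : ℤ) : C.w (C.τ ^ d) = ((-d : ℤ) : WithTop ℤ) :=
  C.w_eq_of_coeff (fun j hj => by rw [C.coeff_tau_zpow, if_neg hj.ne])
    (by simp [C.coeff_tau_zpow])

lemma tau_ne_zero : C.τ ≠ 0 := by
  intro h
  have := C.w_tau_zpow 1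
  rw [zpow_one, h, C.w_zero] at this
  exact WithTop.top_ne_coe this

lemma w_one : C.w 1 = 0 := by simpa using C.w_tau_zpow 0

lemma w_add_w_inv (hf : f ≠ 0) : C.w f + C.w f⁻¹ = 0 := by
  rw [← C.w_val.map_mul, mul_inv_cancel₀ hf, C.w_one]

lemma w_inv {c : ℤ} (hc : C.w f = c) : C.w f⁻¹ = ((-c : ℤ) : WithTop ℤ) := by
  have h := C.w_add_w_inv (f := f) (by rintro rfl; simp [C.w_zero] at hc)
  rw [hc] at h
  cases hi : C.w f⁻¹ with
  | top => simp [hi] at h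
  | coe x => rw [hi, ← WithTop.coe_add, ← WithTop.coe_zero, WithTop.coe_inj] at h; congr 1; omega

lemma w_conj {u : R} (hu : u ≠ 0) (y : R) : C.w (u⁻¹ * y * u) = C.w y := by
  rw [C.w_val.map_mul, C.w_val.map_mul, add_right_comm, add_comm (C.w u⁻¹),
    C.w_add_w_inv hu, zero_add]

end Coefficients

section Frobenius

variable {σ : Lbar ≃ₐ[L] Lbar} {f g : R}

def frob : Lbar ≃ₐ[k] Lbar :=
  haveI := C.algClosure.isAlgClosed
  FiniteField.frobeniusAlgEquiv k Lbar (ringExpChar Lbar)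

lemma frob_apply (a : Lbar) : C.frob a = a ^ q := by
  simp [frob, FiniteField.frobeniusAlgEquiv_apply, C.card_k]

lemma frob_pow_apply (m : ℕ) (a : Lbar) : (C.frob ^ m) a = a ^ q ^ m := by
  induction m generalizing a with
  | zero => simp
  | succ m ih => rw [pow_succ, AlgEquiv.mul_apply, ih, C.frob_apply, ← pow_mul, pow_succ']

lemma frob_zpow_mem {a : Lbar} (d : ℤ) (ha : a ∈ algebraicClosure k Lbar) :
    (C.frob ^ d) a ∈ algebraicClosure k Lbar :=
  (map_mem_algebraicClosure_iff ((C.frob ^ d : Lbar ≃ₐ[k] Lbar) : Lbar →ₐ[k] Lbar)).mpr ha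

lemma apply_eq_frob_zpow {d : ℤ} (hσ : C.WeilCond σ d) {a : Lbar} (ha : IsAlgebraic k a) :
    σ a = (C.frob ^ d) a := by
  apply (C.frob ^ (-d).toNat).injective
  rw [C.frob_pow_apply, hσ a ha, ← C.frob_pow_apply, ← AlgEquiv.mul_apply, ← zpow_natCast,
    ← zpow_natCast, ← zpow_add, show ((-d).toNat : ℤ) + d = d.toNat by omega]

lemma tau_mul_cst (a : Lbar) : C.τ * C.cst a = C.cst (C.frob a) * C.τ := by
  rw [C.τ_comm, C.frob_apply]

lemma tau_inv_mul_cst (a : Lbar) : C.τ⁻¹ * C.cst a = C.cst (C.frob⁻¹ a) * C.τ⁻¹ := by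
  have h := C.tau_mul_cst (C.frob⁻¹ a)
  rw [← AlgEquiv.mul_apply, mul_inv_cancel, AlgEquiv.one_apply] at h
  calc C.τ⁻¹ * C.cst a = C.τ⁻¹ * (C.cst a * C.τ * C.τ⁻¹) := by
        rw [mul_inv_cancel_right₀ C.tau_ne_zero]
    _ = C.τ⁻¹ * (C.τ * C.cst (C.frob⁻¹ a)) * C.τ⁻¹ := by rw [← h]; simp only [mul_assoc]
    _ = C.cst (C.frob⁻¹ a) * C.τ⁻¹ := by rw [inv_mul_cancel_left₀ C.tau_ne_zero]

lemma tau_zpow_mul_cst (d : ℤ) (a : Lbar) :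
    C.τ ^ d * C.cst a = C.cst ((C.frob ^ d) a) * C.τ ^ d := by
  induction d using Int.induction_on generalizing a with
  | zero => simp
  | succ i ih =>
    rw [zpow_add_one₀ C.tau_ne_zero, mul_assoc, C.tau_mul_cst, ← mul_assoc, ih, mul_assoc,
      zpow_add_one, AlgEquiv.mul_apply]
  | pred i ih =>
    rw [zpow_sub_one₀ C.tau_ne_zero, mul_assoc, C.tau_inv_mul_cst, ← mul_assoc, ih, mul_assoc,
      zpow_sub_one, AlgEquiv.mul_apply]

lemma monomial_mul_monomial (a b : Lbar) (s t : ℤ) :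
    C.cst a * C.τ ^ s * (C.cst b * C.τ ^ t) = C.cst (a * (C.frob ^ s) b) * C.τ ^ (s + t) := by
  rw [mul_assoc, ← mul_assoc (C.τ ^ s), C.tau_zpow_mul_cst, mul_assoc, ← zpow_add₀ C.tau_ne_zero,
    ← mul_assoc, ← map_mul]

def trunc (f : R) (s : Finset ℤ) : R := ∑ j ∈ s, C.cst (C.coeff f j) * C.τ ^ (-j)

lemma coeff_trunc (f : R) (s : Finset ℤ) (i : ℤ) :
    C.coeff (C.trunc f s) i = if i ∈ s then C.coeff f i else 0 := by
  simp only [trunc, C.coeff_sum, C.coeff_monomial, neg_neg]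
  exact Finset.sum_ite_eq s i _

lemma le_w_sub_trunc {c : ℤ} (hc : (c : WithTop ℤ) ≤ C.w f) (M : ℤ) :
    ((M + 1 : ℤ) : WithTop ℤ) ≤ C.w (f - C.trunc f (Finset.Icc c M)) :=
  (C.w_coeff _ _).mpr fun j hj => by
    rw [C.coeff_sub, C.coeff_trunc]
    split_ifs with hjs
    · exact sub_self _
    · rw [sub_zero]
      refine C.coeff_eq_zero_of_lt_w (lt_of_lt_of_le ?_ hc)
      simp only [Finset.mem_Icc, not_and_or, not_le] at hjs
      exact_mod_cast hjs.resolve_right (by omega)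

lemma coeff_monomial_mul (a : Lbar) (d : ℤ) (f : R) (i : ℤ) :
    C.coeff (C.cst a * C.τ ^ d * f) i = a * (C.frob ^ d) (C.coeff f (i + d)) := by
  obtain ⟨c, hc⟩ := C.exists_le_w f
  set s := Finset.Icc (min c (i + d)) (i + d)
  have hs : i + d ∈ s := Finset.mem_Icc.mpr ⟨min_le_right _ _, le_rfl⟩
  have hrem : C.coeff (C.cst a * C.τ ^ d * (f - C.trunc f s)) i = 0 := by
    refine C.coeff_eq_zero_of_lt_w ?_
    rw [C.w_val.map_mul]
    calc (i : WithTop ℤ) < ((-d + (i + d + 1) : ℤ) : WithTop ℤ) := by exact_mod_cast (by omega)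
      _ ≤ _ := by
        rw [WithTop.coe_add]
        exact add_le_add (C.le_w_monomial a d)
          (C.le_w_sub_trunc (le_trans (by exact_mod_cast min_le_left _ _) hc) _)
  have hsplit : C.cst a * C.τ ^ d * f
      = C.cst a * C.τ ^ d * C.trunc f s + C.cst a * C.τ ^ d * (f - C.trunc f s) := by
    rw [← mul_add, add_sub_cancel]
  rw [hsplit, C.coeff_add, hrem, add_zero, trunc,
    Finset.mul_sum, C.coeff_sum, Finset.sum_eq_single_of_mem (i + d) hs]
  · rw [C.monomial_mul_monomial, C.coeff_monomial, if_pos (by ring)]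
  · intro j _ hj
    rw [C.monomial_mul_monomial, C.coeff_monomial, if_neg (by omega)]

lemma coeff_mul {cf cg : ℤ} (hf : (cf : WithTop ℤ) ≤ C.w f) (hg : (cg : WithTop ℤ) ≤ C.w g)
    (i : ℤ) : C.coeff (f * g) i =
      ∑ j ∈ Finset.Icc cf (i - cg), C.coeff f j * (C.frob ^ (-j)) (C.coeff g (i - j)) := by
  set t := C.trunc f (Finset.Icc cf (i - cg)) with ht
  have hrem : C.coeff ((f - t) * g) i = 0 := by
    refine C.coeff_eq_zero_of_lt_w ?_
    rw [C.w_val.map_mul]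
    calc (i : WithTop ℤ) < ((i - cg + 1 + cg : ℤ) : WithTop ℤ) := by exact_mod_cast (by omega)
      _ ≤ _ := by rw [WithTop.coe_add]; exact add_le_add (C.le_w_sub_trunc hf _) hg
  have hsplit : f * g = t * g + (f - t) * g := by rw [← add_mul, add_sub_cancel]
  rw [hsplit, C.coeff_add, hrem, add_zero, ht, trunc, Finset.sum_mul, C.coeff_sum]
  exact Finset.sum_congr rfl fun j _ => by rw [C.coeff_monomial_mul, sub_eq_add_neg]

lemma coeff_mul_of_w_eq {cf cg : ℤ} (hf : C.w f = cf) (hg : C.w g = cg) :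
    C.coeff (f * g) (cf + cg) = C.coeff f cf * (C.frob ^ (-cf)) (C.coeff g cg) := by
  rw [C.coeff_mul hf.ge hg.ge, add_sub_cancel_right, Finset.Icc_self, Finset.sum_singleton,
    add_sub_cancel_left]

lemma coeff_mul_tau_zpow (f : R) (d i : ℤ) : C.coeff (f * C.τ ^ d) i = C.coeff f (i + d) := by
  obtain ⟨c, hc⟩ := C.exists_le_w f
  have hc' : ((min c (i + d) : ℤ) : WithTop ℤ) ≤ C.w f :=
    le_trans (by exact_mod_cast min_le_left _ _) hc
  rw [C.coeff_mul hc' (C.w_tau_zpow d).ge, sub_neg_eq_add,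
    Finset.sum_eq_single_of_mem (i + d) (Finset.mem_Icc.mpr ⟨min_le_right _ _, le_rfl⟩)]
  · simp [C.coeff_tau_zpow]
  · intro j _ hj
    rw [C.coeff_tau_zpow, if_neg (by omega), map_zero, mul_zero]

lemma coeff_tau_zpow_mul (d : ℤ) (f : R) (i : ℤ) :
    C.coeff (C.τ ^ d * f) i = (C.frob ^ d) (C.coeff f (i + d)) := by
  simpa using C.coeff_monomial_mul 1 d f i

end Frobenius

section KbarSeries

variable {σ : Lbar ≃ₐ[L] Lbar} {f : R}

/-- `k̄((τ⁻¹)) ⊆ L̄((τ⁻¹))`. -/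
def kbarSeries : Subring R where
  carrier := {f | ∀ i, C.coeff f i ∈ algebraicClosure k Lbar}
  mul_mem' {f g} hf hg i := by
    obtain ⟨cf, hcf⟩ := C.exists_le_w f
    obtain ⟨cg, hcg⟩ := C.exists_le_w g
    rw [C.coeff_mul hcf hcg]
    exact sum_mem fun j _ => mul_mem (hf j) (C.frob_zpow_mem _ (hg _))
  one_mem' i := by
    rw [C.coeff_one]
    split_ifs
    exacts [one_mem _, zero_mem _]
  add_mem' hf hg i := by rw [C.coeff_add]; exact add_mem (hf i) (hg i)
  zero_mem' i := by rw [C.coeff_zero]; exact zero_mem _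
  neg_mem' hf i := by rw [C.coeff_neg]; exact neg_mem (hf i)

lemma trunc_mem_kbarSeries {s : Finset ℤ} (h : ∀ j ∈ s, C.coeff f j ∈ algebraicClosure k Lbar) :
    C.trunc f s ∈ C.kbarSeries := fun i => by
  rw [C.coeff_trunc]
  split_ifs with hi
  exacts [h i hi, zero_mem _]

lemma galAct_mem_kbarSeries (σ : Lbar ≃ₐ[L] Lbar) (hf : f ∈ C.kbarSeries) :
    C.galAct σ f ∈ C.kbarSeries := fun i => by
  rw [C.galAct_coeff]
  exact (map_mem_algebraicClosure_iff ((σ.restrictScalars k : Lbar ≃ₐ[k] Lbar) :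
    Lbar →ₐ[k] Lbar)).mpr (hf i)

lemma galAct_mul_tau_zpow {d : ℤ} (hσ : C.WeilCond σ d) (hf : f ∈ C.kbarSeries) :
    C.galAct σ f * C.τ ^ d = C.τ ^ d * f :=
  C.coeff_injective _ _ fun i => by
    rw [C.coeff_mul_tau_zpow, C.coeff_tau_zpow_mul, C.galAct_coeff,
      C.apply_eq_frob_zpow hσ (mem_algebraicClosure_iff.mp (hf _))]

end KbarSeries

section Rigidity

variable {g g' : R} {m : ℤ} (hm : m < 0) (hg : g ∈ C.kbarSeries) (hg' : g' ∈ C.kbarSeries)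
  (hwg : C.w g = m) (hwg' : C.w g' = m)
include hm hg hg' hwg hwg'

/-- Comparing the coefficients of `τ^{-(m + c)}`, the leading coefficient `β` of `r` satisfies
`a β^{q^{-m}} - β b ∈ k̄` with `a, b ∈ k̄` and `a ≠ 0`. -/
lemma leadCoeff_mem_of_mul_sub_mul_mem {r : R} {c : ℤ} (hr : C.w r = c)
    (h : g * r - r * g' ∈ C.kbarSeries) : C.coeff r c ∈ algebraicClosure k Lbar := by
  have ha : C.coeff g m ≠ 0 := C.coeff_w_ne_zero hwg
  obtain ⟨M, hM⟩ : ∃ M : ℕ, -m = M := ⟨(-m).toNat, by omega⟩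
  have hδ := h (m + c)
  rw [C.coeff_sub, C.coeff_mul_of_w_eq hwg hr, add_comm m c, C.coeff_mul_of_w_eq hr hwg', hM,
    zpow_natCast, C.frob_pow_apply] at hδ
  refine mem_algebraicClosure_of_pow_eq (Nat.one_lt_pow (show M ≠ 0 by omega) C.one_lt_q)
    (mul_mem (inv_mem (hg m)) (C.frob_zpow_mem (-c) (hg' m))) (mul_mem (inv_mem (hg m)) hδ) ?_
  field_simp
  ring

lemma exists_mem_kbarSeries_le_w_sub {v t : R} (hrel : g * v = v * g')
    (ht : t ∈ C.kbarSeries) {c : ℤ} (hc : C.w (v - t) = c) :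
    ∃ t' ∈ C.kbarSeries, ((c + 1 : ℤ) : WithTop ℤ) ≤ C.w (v - t') := by
  have hE : g * (v - t) - (v - t) * g' = t * g' - g * t := by
    rw [mul_sub, sub_mul, hrel]; abel
  have hβ := C.leadCoeff_mem_of_mul_sub_mul_mem hm hg hg' hwg hwg' hc
    (hE ▸ sub_mem (mul_mem ht hg') (mul_mem hg ht))
  refine ⟨t + C.trunc (v - t) (Finset.Icc c c),
    add_mem ht (C.trunc_mem_kbarSeries fun j hj => by
      rw [Finset.Icc_self, Finset.mem_singleton] at hj
      rwa [hj]), ?_⟩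
  rw [← sub_sub]
  exact C.le_w_sub_trunc hc.ge c

lemma mem_kbarSeries_of_mul_eq_mul {v : R} (hrel : g * v = v * g') : v ∈ C.kbarSeries := by
  obtain ⟨c, hc⟩ := C.exists_le_w v
  have happrox : ∀ N : ℕ, ∃ t ∈ C.kbarSeries, ((c + N : ℤ) : WithTop ℤ) ≤ C.w (v - t) := by
    intro N
    induction N with
    | zero => exact ⟨0, zero_mem _, by simpa using hc⟩
    | succ N ih =>
      obtain ⟨t, ht, hle⟩ := ih
      rcases eq_or_ne (v - t) 0 with hvt | hvt
      · exact ⟨t, ht, by rw [hvt, C.w_zero]; exact le_top⟩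
      obtain ⟨c', hc'⟩ := C.exists_w_eq hvt
      obtain ⟨t', ht', hle'⟩ := C.exists_mem_kbarSeries_le_w_sub hm hg hg' hwg hwg' hrel ht hc'
      rw [hc', WithTop.coe_le_coe] at hle
      exact ⟨t', ht', le_trans (by exact_mod_cast (by omega)) hle'⟩
  intro i
  obtain ⟨t, ht, hle⟩ := happrox (i + 1 - c).toNat
  have hi : C.coeff (v - t) i = 0 :=
    C.coeff_eq_zero_of_lt_w (lt_of_lt_of_le (by exact_mod_cast (by omega)) hle)
  rw [C.coeff_sub, sub_eq_zero] at hi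
  exact hi ▸ ht i

end Rigidity

section GaloisAction

variable {σ : Lbar ≃ₐ[L] Lbar}

lemma galAct_mul_apply (σ₁ σ₂ : Lbar ≃ₐ[L] Lbar) (f : R) :
    C.galAct (σ₁ * σ₂) f = C.galAct σ₁ (C.galAct σ₂ f) :=
  C.coeff_injective _ _ fun i => by simp only [C.galAct_coeff, AlgEquiv.mul_apply]

lemma galAct_eq_self {f : R} (hf : ∀ i, C.coeff f i ∈ (algebraMap L Lbar).range) :
    C.galAct σ f = f :=
  C.coeff_injective _ _ fun i => by
    obtain ⟨a, ha⟩ := hf i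
    rw [C.galAct_coeff, ← ha, σ.commutes]

lemma w_galAct (f : R) : C.w (C.galAct σ f) = C.w f := by
  rcases eq_or_ne f 0 with rfl | hf
  · rw [map_zero]
  obtain ⟨c, hc⟩ := C.exists_w_eq hf
  rw [hc]
  refine C.w_eq_of_coeff (fun j hj => ?_) ?_ <;> rw [C.galAct_coeff]
  · rw [C.coeff_eq_zero_of_lt_w (by rw [hc]; exact_mod_cast hj), map_zero]
  · exact (map_ne_zero σ).mpr (C.coeff_w_ne_zero hc)

end GaloisAction

section SatoTateRepresentation

variable {σ : Lbar ≃ₐ[L] Lbar} {d : ℤ} {u : R}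

lemma rho_ne_zero (hu : u ≠ 0) : C.rho σ d u ≠ 0 :=
  mul_ne_zero (mul_ne_zero ((map_ne_zero _).mpr hu) (zpow_ne_zero d C.tau_ne_zero))
    (inv_ne_zero hu)

lemma w_rho (hu : u ≠ 0) : C.w (C.rho σ d u) = ((-d : ℤ) : WithTop ℤ) := by
  rw [rho, C.w_val.map_mul, C.w_val.map_mul, C.w_galAct, C.w_tau_zpow, add_right_comm,
    C.w_add_w_inv hu, zero_add]

lemma rho_mul_right (hσ : C.WeilCond σ d) {v : R} (hv : v ∈ C.kbarSeries) (hv0 : v ≠ 0)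
    (u : R) : C.rho σ d (u * v) = C.rho σ d u := by
  simp only [rho, map_mul, mul_inv_rev, mul_assoc]
  rw [← mul_assoc (C.galAct σ v), C.galAct_mul_tau_zpow hσ hv, mul_assoc,
    mul_inv_cancel_left₀ hv0]

lemma rho_mul_left {x : R} (hx : C.galAct σ x = x) (u : R) :
    C.rho σ d (x * u) = x * C.rho σ d u * x⁻¹ := by
  simp only [rho, map_mul, hx, mul_inv_rev, mul_assoc]

lemma rho_mul_rho {σ₁ σ₂ : Lbar ≃ₐ[L] Lbar} (d₁ d₂ : ℤ) (hu : u ≠ 0) :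
    C.rho σ₁ d₁ (C.galAct σ₂ u) * C.rho σ₂ d₂ u = C.rho (σ₁ * σ₂) (d₁ + d₂) u := by
  simp only [rho, C.galAct_mul_apply, zpow_add₀ C.tau_ne_zero, mul_assoc,
    inv_mul_cancel_left₀ ((map_ne_zero _).mpr hu)]

lemma rho_eq_of_conj_mem (hσ : C.WeilCond σ d) {y : R} {m : ℤ} (hm : m < 0) (hy : C.w y = m)
    {u' : R} (hu : u ≠ 0) (hu' : u' ≠ 0) (h : u⁻¹ * y * u ∈ C.kbarSeries)
    (h' : u'⁻¹ * y * u' ∈ C.kbarSeries) : C.rho σ d u = C.rho σ d u' := by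
  have hv : u⁻¹ * u' ∈ C.kbarSeries :=
    C.mem_kbarSeries_of_mul_eq_mul hm h h' (by rw [C.w_conj hu, hy]) (by rw [C.w_conj hu', hy])
      (by simp only [mul_assoc, mul_inv_cancel_left₀ hu, mul_inv_cancel_left₀ hu'])
  rw [← C.rho_mul_right hσ hv (mul_ne_zero (inv_ne_zero hu) hu') u, mul_inv_cancel_left₀ hu]

lemma commute_rho (hσ : C.WeilCond σ d) {y : R} {m : ℤ} (hm : m < 0) (hy : C.w y = m)
    (hu : u ≠ 0) (h : u⁻¹ * y * u ∈ C.kbarSeries) {x : R} (hxy : x * y = y * x)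
    (hx : C.galAct σ x = x) : x * C.rho σ d u = C.rho σ d u * x := by
  rcases eq_or_ne x 0 with rfl | hx0
  · rw [zero_mul, mul_zero]
  have hconj : (x * u)⁻¹ * y * (x * u) = u⁻¹ * y * u := by
    rw [mul_inv_rev, mul_assoc u⁻¹, mul_assoc, mul_assoc x⁻¹, ← mul_assoc y, ← hxy, mul_assoc,
      inv_mul_cancel_left₀ hx0, ← mul_assoc]
  have hrho := C.rho_eq_of_conj_mem hσ hm hy hu (mul_ne_zero hx0 hu) h (hconj ▸ h)
  rw [C.rho_mul_left hx] at hrho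
  calc x * C.rho σ d u = x * C.rho σ d u * x⁻¹ * x := by rw [inv_mul_cancel_right₀ hx0]
    _ = C.rho σ d u * x := by rw [← hrho]

lemma exists_finset_le_w_rho_sub_one (m : ℤ) (hu : u ≠ 0) :
    ∃ s : Finset Lbar, ∀ σ : Lbar ≃ₐ[L] Lbar, (∀ x ∈ s, σ x = x) →
      (m : WithTop ℤ) ≤ C.w (C.rho σ 0 u - 1) := by
  obtain ⟨c, hc⟩ := C.exists_w_eq hu
  refine ⟨(Finset.Icc c (m + c)).image (C.coeff u), fun σ hσ => ?_⟩
  have hfix : ((m + c : ℤ) : WithTop ℤ) ≤ C.w (C.galAct σ u - u) :=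
    (C.w_coeff _ _).mpr fun j hj => by
      rw [C.coeff_sub, C.galAct_coeff, sub_eq_zero]
      rcases lt_or_ge j c with hjc | hjc
      · rw [C.coeff_eq_zero_of_lt_w (by rw [hc]; exact_mod_cast hjc), map_zero]
      · exact hσ _ (Finset.mem_image_of_mem _ (Finset.mem_Icc.mpr ⟨hjc, hj.le⟩))
  have hsub : C.rho σ 0 u - 1 = (C.galAct σ u - u) * u⁻¹ := by
    rw [rho, zpow_zero, mul_one, sub_mul, mul_inv_cancel₀ hu]
  rw [hsub, C.w_val.map_mul, C.w_inv hc]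
  calc (m : WithTop ℤ) = ((m + c : ℤ) : WithTop ℤ) + ((-c : ℤ) : WithTop ℤ) := by
        rw [← WithTop.coe_add, add_neg_cancel_right]
    _ ≤ _ := by gcongr

end SatoTateRepresentation

lemma exists_w_phi_neg : ∃ (a : C.A) (m : ℤ), m < 0 ∧ C.w (C.φ a) = m := by
  obtain ⟨a, i, hi0, hcoeff⟩ := C.φ_nonconst
  have hi : i < 0 := lt_of_le_of_ne (not_lt.mp fun h => hcoeff (C.φ_poly a i h)) hi0
  obtain ⟨m, hm⟩ := C.exists_w_eq (f := C.φ a) fun h => hcoeff (by rw [h, C.coeff_zero])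
  refine ⟨a, m, ?_, hm⟩
  have := C.w_le_of_coeff_ne_zero hcoeff
  rw [hm, WithTop.coe_le_coe] at this
  omega

lemma conj_phi_mem_kbarSeries {u : R} (hu : C.UGoodInf u) (a : C.A) :
    u⁻¹ * C.φ a * u ∈ C.kbarSeries := fun i => by
  rw [← C.phiinf_extends, mem_algebraicClosure_iff]
  exact hu.2 _ i

lemma galAct_phi (σ : Lbar ≃ₐ[L] Lbar) (a : C.A) : C.galAct σ (C.φ a) = C.φ a :=
  C.galAct_eq_self (C.φ_coeff_L a)

/-- **Lemma 2.2(iii)–(vi): basic properties of the Sato–Tate representation `ρ_∞`.**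
Let `φ : A → L[τ]` be a Drinfeld module of rank `n`, and fix `u ∈ L̄((τ⁻¹))^×` with
`u⁻¹ · φ(F_∞) · u ⊆ k̄((τ⁻¹))`.  Then:
(i) for every `σ ∈ W_L` (with degree `deg σ = d`) the series
`σ(u)·τ^{deg σ}·u⁻¹` belongs to `D_φ^×` and does not depend on the choice of `u`;
(ii) `ord_{τ⁻¹}(ρ_∞ σ) = −deg σ`;
(iii) `ρ_∞ : W_L → D_φ^×` is a continuous group homomorphism;
(iv) `ρ_∞(W_L)` commutes with `End_L(φ)`. -/
theorem rho_infty_basic_properties :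
    -- (i) membership in `D_φ^×` and independence of the choice of `u`
    (∀ (σ : Lbar ≃ₐ[L] Lbar) (d : ℤ) (u u' : R), C.WeilCond σ d →
      C.UGoodInf u → C.UGoodInf u' →
      C.rho σ d u ∈ C.D ∧ C.rho σ d u ≠ 0 ∧ C.rho σ d u = C.rho σ d u') ∧
    -- (ii) `ord_{τ⁻¹}(ρ_∞ σ) = −deg σ`
    (∀ (σ : Lbar ≃ₐ[L] Lbar) (d : ℤ) (u : R), C.WeilCond σ d → C.UGoodInf u →
      C.w (C.rho σ d u) = ((-d : ℤ) : WithTop ℤ)) ∧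
    -- (iii) `ρ_∞` is a group homomorphism ...
    (∀ (σ₁ σ₂ : Lbar ≃ₐ[L] Lbar) (d₁ d₂ : ℤ) (u : R), C.WeilCond σ₁ d₁ →
      C.WeilCond σ₂ d₂ → C.UGoodInf u →
      C.rho (σ₁ * σ₂) (d₁ + d₂) u = C.rho σ₁ d₁ u * C.rho σ₂ d₂ u) ∧
    -- ... which is continuous: on the degree-zero part of `W_L` (i.e. `Gal(L^sep/L·k̄)`,
    -- carrying the Krull topology) the map `σ ↦ ρ_∞ σ` is continuous at the identity
    (∀ (m : ℤ) (u : R), C.UGoodInf u → ∃ s : Finset Lbar,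
      ∀ σ : Lbar ≃ₐ[L] Lbar, C.WeilCond σ 0 → (∀ x ∈ s, σ x = x) →
        (m : WithTop ℤ) ≤ C.w (C.rho σ 0 u - 1)) ∧
    -- (iv) the image of `ρ_∞` commutes with `End_L(φ)`
    (∀ (σ : Lbar ≃ₐ[L] Lbar) (d : ℤ) (u : R), C.WeilCond σ d → C.UGoodInf u →
      ∀ f ∈ C.EndL, C.rho σ d u * f = f * C.rho σ d u) := by
  obtain ⟨a₀, m₀, hm₀, hy⟩ := C.exists_w_phi_neg
  have hcomm : ∀ {σ d u}, C.WeilCond σ d → C.UGoodInf u → ∀ {x}, x * C.φ a₀ = C.φ a₀ * x →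
      C.galAct σ x = x → x * C.rho σ d u = C.rho σ d u * x := fun hσ hu =>
    C.commute_rho hσ hm₀ hy hu.1 (C.conj_phi_mem_kbarSeries hu a₀)
  refine ⟨fun σ d u u' hσ hu hu' => ⟨?_, C.rho_ne_zero hu.1, ?_⟩,
    fun σ d u _ hu => C.w_rho hu.1, fun σ₁ σ₂ d₁ d₂ u hσ₁ _ hu => ?_,
    fun m u hu => (C.exists_finset_le_w_rho_sub_one m hu.1).imp fun _ hs σ _ => hs σ,
    fun σ d u hσ hu f hf => (hcomm hσ hu (hf.2 a₀) (C.galAct_eq_self hf.1.2)).symm⟩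
  · refine Subring.mem_centralizer_iff.mpr ?_
    rintro _ ⟨a, rfl⟩
    exact hcomm hσ hu (by rw [← map_mul, ← map_mul, mul_comm]) (C.galAct_phi σ a)
  · exact C.rho_eq_of_conj_mem hσ hm₀ hy hu.1 hu'.1 (C.conj_phi_mem_kbarSeries hu a₀)
      (C.conj_phi_mem_kbarSeries hu' a₀)
  · have hσ₂u : (C.galAct σ₂ u)⁻¹ * C.φ a₀ * C.galAct σ₂ u ∈ C.kbarSeries := by
      rw [← C.galAct_phi σ₂ a₀, ← map_inv₀, ← map_mul, ← map_mul]
      exact C.galAct_mem_kbarSeries σ₂ (C.conj_phi_mem_kbarSeries hu a₀)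
    rw [← C.rho_mul_rho d₁ d₂ hu.1, C.rho_eq_of_conj_mem hσ₁ hm₀ hy hu.1 ((map_ne_zero _).mpr hu.1)
      (C.conj_phi_mem_kbarSeries hu a₀) hσ₂u]

end Ctx

end SatoTate
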